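/- arXiv:2112.03788 — 3 statements merged into one kernel-verified Lean document; each statement's English description precedes it below -/
import Mathlib

section
/- The number of rank-2 matroids on a ground set of size n equals b(n+1) - 2^n, where b(m) denotes the m-th Bell number. -/
/-- `I` is the collection of independent sets of a matroid on ground set `Fin n`. -/
def IsMatroidIndep {n : ℕ} (I : Finset (Finset (Fin n))) : Prop :=
  ∅ ∈ I ∧
  (∀ A ∈ I, ∀ B ⊆ A, B ∈ I) ∧
  (∀ A ∈ I, ∀ B ∈ I, B.card < A.card → ∃ a ∈ A \ B, insert a B ∈ I)

/-- The rank of a matroid: the maximum size of an independent set. -/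
def matroidRank {n : ℕ} (I : Finset (Finset (Fin n))) : ℕ := I.sup Finset.card

/-- The `m`-th Bell number: the number of partitions of an `m`-element set,
equivalently the number of equivalence relations (setoids) on it. -/
noncomputable def bell (m : ℕ) : ℕ := Nat.card (Setoid (Fin m))

namespace CountRankTwoAux

open Finset
open scoped Classical

lemma setoid_finite (α : Type*) [Finite α] : Finite (Setoid α) :=
  Finite.of_injective (fun s : Setoid α => s.r) fun s t h => by
    cases s; cases t; congr 1

variable {n : ℕ}

/-- A setoid on `Fin (n+1)` is good if it has at least two classes not containing
`Fin.last n`. -/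
def Good (s : Setoid (Fin (n + 1))) : Prop :=
  ∃ x y, ¬ s x (Fin.last n) ∧ ¬ s y (Fin.last n) ∧ ¬ s x y

/-- The matroid associated to a setoid. -/
noncomputable def toI (s : Setoid (Fin (n + 1))) : Finset (Finset (Fin n)) :=
  Finset.univ.filter fun A => A.card ≤ 2 ∧ (∀ x ∈ A, ¬ s x.castSucc (Fin.last n)) ∧
    ∀ x ∈ A, ∀ y ∈ A, x ≠ y → ¬ s x.castSucc y.castSucc

lemma mem_toI {s : Setoid (Fin (n + 1))} {A : Finset (Fin n)} :
    A ∈ toI s ↔ A.card ≤ 2 ∧ (∀ x ∈ A, ¬ s x.castSucc (Fin.last n)) ∧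
      ∀ x ∈ A, ∀ y ∈ A, x ≠ y → ¬ s x.castSucc y.castSucc := by
  simp [toI]

/-- The class map of a matroid: `Fin.last n` and loops go to `∅`,
a nonloop goes to its parallel class. -/
def Fmap (I : Finset (Finset (Fin n))) : Fin (n + 1) → Finset (Fin n) :=
  Fin.lastCases ∅ fun x => if {x} ∈ I then
    Finset.univ.filter (fun y => {y} ∈ I ∧ (y = x ∨ ({x, y} : Finset (Fin n)) ∉ I)) else ∅

/-- The setoid associated to a matroid. -/
def toS (I : Finset (Finset (Fin n))) : Setoid (Fin (n + 1)) := Setoid.ker (Fmap I)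

lemma toS_rel {I : Finset (Finset (Fin n))} {a b : Fin (n + 1)} :
    toS I a b ↔ Fmap I a = Fmap I b := Setoid.ker_def

@[simp] lemma Fmap_last {I : Finset (Finset (Fin n))} : Fmap I (Fin.last n) = ∅ :=
  Fin.lastCases_last

lemma Fmap_castSucc_of_loop {I : Finset (Finset (Fin n))} {x : Fin n} (h : {x} ∉ I) :
    Fmap I x.castSucc = ∅ := by
  rw [Fmap, Fin.lastCases_castSucc, if_neg h]

lemma mem_Fmap {I : Finset (Finset (Fin n))} {x : Fin n} (h : {x} ∈ I) {y : Fin n} :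
    y ∈ Fmap I x.castSucc ↔ ({y} ∈ I ∧ (y = x ∨ ({x, y} : Finset (Fin n)) ∉ I)) := by
  rw [Fmap, Fin.lastCases_castSucc, if_pos h, Finset.mem_filter]
  simp

section Matroid

variable {I : Finset (Finset (Fin n))} (hI : IsMatroidIndep I) (hr : matroidRank I = 2)

include hI in
lemma single_of_pair {x y : Fin n} (h : ({x, y} : Finset (Fin n)) ∈ I) :
    ({y} : Finset (Fin n)) ∈ I :=
  hI.2.1 _ h {y} (by simp)

include hI in
lemma exchange_pair {x y z : Fin n} (hx : ({x} : Finset (Fin n)) ∈ I)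
    (hyz : ({y, z} : Finset (Fin n)) ∈ I) (hne : y ≠ z) :
    ({x, y} : Finset (Fin n)) ∈ I ∨ ({x, z} : Finset (Fin n)) ∈ I := by
  obtain ⟨a, ha, hins⟩ := hI.2.2 {y, z} hyz {x} hx
    (by rw [Finset.card_singleton, Finset.card_pair hne]; omega)
  rw [Finset.mem_sdiff, Finset.mem_insert, Finset.mem_singleton] at ha
  have hp : insert a ({x} : Finset (Fin n)) = {x, a} := Finset.pair_comm a x
  rw [hp] at hins
  rcases ha.1 with rfl | rfl
  · exact Or.inl hins
  · exact Or.inr hins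

include hr in
lemma card_le_two {A : Finset (Fin n)} (hA : A ∈ I) : A.card ≤ 2 :=
  hr ▸ Finset.le_sup hA

lemma loop_iff (x : Fin n) : toS I x.castSucc (Fin.last n) ↔ ({x} : Finset (Fin n)) ∉ I := by
  rw [toS_rel, Fmap_last]
  by_cases h : ({x} : Finset (Fin n)) ∈ I
  · have hx : x ∈ Fmap I x.castSucc := (mem_Fmap h).2 ⟨h, Or.inl rfl⟩
    exact iff_of_false (Finset.ne_empty_of_mem hx) (fun hc => hc h)
  · exact iff_of_true (Fmap_castSucc_of_loop h) h

include hI in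
lemma pair_iff {x y : Fin n} (hx : ({x} : Finset (Fin n)) ∈ I)
    (hy : ({y} : Finset (Fin n)) ∈ I) (hne : x ≠ y) :
    toS I x.castSucc y.castSucc ↔ ({x, y} : Finset (Fin n)) ∉ I := by
  rw [toS_rel]
  constructor
  · intro h
    have hyy : y ∈ Fmap I y.castSucc := (mem_Fmap hy).2 ⟨hy, Or.inl rfl⟩
    rw [← h, mem_Fmap hx] at hyy
    rcases hyy.2 with rfl | hp
    · exact absurd rfl hne
    · exact hp
  · intro hxy
    have key : ∀ u v z : Fin n, ({u} : Finset (Fin n)) ∈ I → ({v} : Finset (Fin n)) ∈ I →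
        u ≠ v → ({u, v} : Finset (Fin n)) ∉ I →
        ({z} ∈ I ∧ (z = u ∨ ({u, z} : Finset (Fin n)) ∉ I)) →
        ({z} ∈ I ∧ (z = v ∨ ({v, z} : Finset (Fin n)) ∉ I)) := by
      rintro u v z hu hv huv hp ⟨hz, hz2⟩
      refine ⟨hz, ?_⟩
      rcases hz2 with rfl | hpz
      · exact Or.inr (by rwa [Finset.pair_comm])
      · by_cases hzv : z = v
        · exact Or.inl hzv
        · refine Or.inr fun hvz => ?_
          rcases exchange_pair hI hu hvz (Ne.symm hzv) with h1 | h2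
          · exact hp h1
          · exact hpz h2
    ext z
    rw [mem_Fmap hx, mem_Fmap hy]
    constructor
    · exact key x y z hx hy hne hxy
    · exact key y x z hy hx hne.symm (by rwa [Finset.pair_comm])

include hI hr in
lemma exists_pair : ∃ a b : Fin n, a ≠ b ∧ ({a, b} : Finset (Fin n)) ∈ I := by
  obtain ⟨A, hA, hAs⟩ := Finset.exists_mem_eq_sup I ⟨∅, hI.1⟩ Finset.card
  have : A.card = 2 := by rw [← hAs]; exact hr
  obtain ⟨a, b, hab, rfl⟩ := Finset.card_eq_two.1 this
  exact ⟨a, b, hab, hA⟩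

include hI hr in
lemma good_toS : Good (toS I) := by
  obtain ⟨a, b, hab, hpair⟩ := exists_pair hI hr
  have ha : ({a} : Finset (Fin n)) ∈ I := single_of_pair hI (by rwa [Finset.pair_comm])
  have hb : ({b} : Finset (Fin n)) ∈ I := single_of_pair hI hpair
  refine ⟨a.castSucc, b.castSucc, ?_, ?_, ?_⟩
  · rw [loop_iff]; exact not_not_intro ha
  · rw [loop_iff]; exact not_not_intro hb
  · rw [pair_iff hI ha hb hab]; exact not_not_intro hpair

include hI hr in
lemma toI_toS : toI (toS I) = I := by
  ext A
  rw [mem_toI]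
  constructor
  · rintro ⟨hcard, hloop, hpair⟩
    have hsing : ∀ x ∈ A, ({x} : Finset (Fin n)) ∈ I := fun x hx =>
      not_not.1 (fun h => hloop x hx ((loop_iff x).2 h))
    obtain h0 | h1 | h2 : A.card = 0 ∨ A.card = 1 ∨ A.card = 2 := by omega
    · rw [Finset.card_eq_zero] at h0; subst h0; exact hI.1
    · obtain ⟨x, rfl⟩ := Finset.card_eq_one.1 h1
      exact hsing x (Finset.mem_singleton_self x)
    · obtain ⟨x, y, hxy, rfl⟩ := Finset.card_eq_two.1 h2
      have hx : x ∈ ({x, y} : Finset (Fin n)) := by simp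
      have hy : y ∈ ({x, y} : Finset (Fin n)) := by simp
      have := hpair x hx y hy hxy
      rw [pair_iff hI (hsing x hx) (hsing y hy) hxy] at this
      exact not_not.1 this
  · intro hA
    have hsub : ∀ B ⊆ A, B ∈ I := hI.2.1 A hA
    refine ⟨card_le_two hr hA, ?_, ?_⟩
    · intro x hx
      rw [loop_iff]
      exact not_not_intro (hsub {x} (Finset.singleton_subset_iff.2 hx))
    · intro x hx y hy hne
      rw [pair_iff hI (hsub {x} (Finset.singleton_subset_iff.2 hx))
        (hsub {y} (Finset.singleton_subset_iff.2 hy)) hne]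
      exact not_not_intro (hsub {x, y} (by simp [Finset.insert_subset_iff, hx, hy]))

end Matroid

section FromSetoid

variable {s : Setoid (Fin (n + 1))}

lemma single_mem_toI {x : Fin n} :
    ({x} : Finset (Fin n)) ∈ toI s ↔ ¬ s x.castSucc (Fin.last n) := by
  rw [mem_toI]
  constructor
  · rintro ⟨-, h, -⟩; exact h x (Finset.mem_singleton_self x)
  · intro h
    exact ⟨by simp, fun z hz => by rwa [Finset.mem_singleton.1 hz],
      fun z hz w hw hzw =>
        absurd (by rw [Finset.mem_singleton.1 hz, Finset.mem_singleton.1 hw]) hzw⟩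

lemma pair_mem_toI {x y : Fin n} (hne : x ≠ y) :
    ({x, y} : Finset (Fin n)) ∈ toI s ↔
      ¬ s x.castSucc (Fin.last n) ∧ ¬ s y.castSucc (Fin.last n) ∧
        ¬ s x.castSucc y.castSucc := by
  rw [mem_toI]
  constructor
  · rintro ⟨-, h1, h2⟩
    exact ⟨h1 x (by simp), h1 y (by simp), h2 x (by simp) y (by simp) hne⟩
  · rintro ⟨h1, h2, h3⟩
    refine ⟨le_trans (Finset.card_insert_le _ _) (by simp), ?_, ?_⟩
    · intro z hz
      rcases Finset.mem_insert.1 hz with rfl | hz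
      · exact h1
      · rw [Finset.mem_singleton.1 hz]; exact h2
    · intro z hz w hw hzw
      rcases Finset.mem_insert.1 hz with rfl | hz' <;>
        rcases Finset.mem_insert.1 hw with rfl | hw'
      · exact absurd rfl hzw
      · rw [Finset.mem_singleton.1 hw']; exact h3
      · rw [Finset.mem_singleton.1 hz']
        intro h; exact h3 (s.symm' h)
      · rw [Finset.mem_singleton.1 hz', Finset.mem_singleton.1 hw'] at hzw
        exact absurd rfl hzw

lemma indep_toI : IsMatroidIndep (toI s) := by
  refine ⟨by simp [mem_toI], ?_, ?_⟩
  · intro A hA B hBA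
    rw [mem_toI] at hA ⊢
    exact ⟨le_trans (Finset.card_le_card hBA) hA.1, fun x hx => hA.2.1 x (hBA hx),
      fun x hx y hy => hA.2.2 x (hBA hx) y (hBA hy)⟩
  · intro A hA B hB hcard
    have hA' := mem_toI.1 hA
    have hB' := mem_toI.1 hB
    obtain hB0 | hB1 : B.card = 0 ∨ B.card = 1 := by
      have := hA'.1; omega
    · rw [Finset.card_eq_zero] at hB0
      subst hB0
      obtain ⟨a, ha⟩ := Finset.card_pos.1 (by omega : 0 < A.card)
      refine ⟨a, by simp [ha], ?_⟩
      have he : insert a (∅ : Finset (Fin n)) = {a} := rfl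
      rw [he, single_mem_toI]
      exact hA'.2.1 a ha
    · obtain ⟨b, rfl⟩ := Finset.card_eq_one.1 hB1
      have hA2 : A.card = 2 := by
        have := hA'.1
        rw [Finset.card_singleton] at hcard
        omega
      obtain ⟨a₁, a₂, ha12, rfl⟩ := Finset.card_eq_two.1 hA2
      have h1 : a₁ ∈ ({a₁, a₂} : Finset (Fin n)) := by simp
      have h2 : a₂ ∈ ({a₁, a₂} : Finset (Fin n)) := by simp
      have hb : ¬ s b.castSucc (Fin.last n) := hB'.2.1 b (by simp)
      have hne12 : ¬ s a₁.castSucc a₂.castSucc := hA'.2.2 a₁ h1 a₂ h2 ha12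
      obtain ⟨a, ha, hab⟩ : ∃ a ∈ ({a₁, a₂} : Finset (Fin n)), ¬ s a.castSucc b.castSucc := by
        by_contra h
        push_neg at h
        exact hne12 (s.trans' (h a₁ h1) (s.symm' (h a₂ h2)))
      have hanb : a ≠ b := fun h => hab (h ▸ s.refl' _)
      refine ⟨a, ?_, ?_⟩
      · rw [Finset.mem_sdiff]; exact ⟨ha, by simpa using hanb⟩
      · have he : insert a ({b} : Finset (Fin n)) = {a, b} := rfl
        rw [he, pair_mem_toI hanb]
        exact ⟨hA'.2.1 a ha, hb, hab⟩

lemma rank_toI (hs : Good s) : matroidRank (toI s) = 2 := by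
  obtain ⟨x, y, hx, hy, hxy⟩ := hs
  have hxl : x ≠ Fin.last n := fun h => hx (h ▸ s.refl' x)
  have hyl : y ≠ Fin.last n := fun h => hy (h ▸ s.refl' y)
  set x' := x.castPred hxl with hx'
  set y' := y.castPred hyl with hy'
  have hxx : x'.castSucc = x := Fin.castSucc_castPred x hxl
  have hyy : y'.castSucc = y := Fin.castSucc_castPred y hyl
  have hne : x' ≠ y' := by
    intro h
    apply hxy
    rw [← hxx, ← hyy, h]
  apply le_antisymm
  · exact Finset.sup_le fun A hA => (mem_toI.1 hA).1
  · have hmem : ({x', y'} : Finset (Fin n)) ∈ toI s := by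
      rw [pair_mem_toI hne, hxx, hyy]
      exact ⟨hx, hy, hxy⟩
    calc 2 = ({x', y'} : Finset (Fin n)).card := (Finset.card_pair hne).symm
      _ ≤ _ := Finset.le_sup hmem

lemma toS_toI (hs : Good s) : toS (toI s) = s := by
  have hFl : ∀ x : Fin n, ¬ s x.castSucc (Fin.last n) →
      Fmap (toI s) x.castSucc = Finset.univ.filter (fun y => s x.castSucc y.castSucc) := by
    intro x hx
    have hxI : ({x} : Finset (Fin n)) ∈ toI s := single_mem_toI.2 hx
    ext z
    rw [mem_Fmap hxI, Finset.mem_filter]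
    simp only [Finset.mem_univ, true_and]
    constructor
    · rintro ⟨hz, hz2⟩
      by_cases hzx : z = x
      · subst hzx; exact s.refl' _
      · rcases hz2 with rfl | hp
        · exact s.refl' _
        · have hzc : ¬ s z.castSucc (Fin.last n) := single_mem_toI.1 hz
          by_contra hns
          exact hp ((pair_mem_toI (fun h => hzx h.symm)).2 ⟨hx, hzc, hns⟩)
    · intro hsxz
      have hzc : ¬ s z.castSucc (Fin.last n) := fun h => hx (s.trans' hsxz h)
      refine ⟨single_mem_toI.2 hzc, ?_⟩
      by_cases hzx : z = x
      · exact Or.inl hzx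
      · exact Or.inr fun hmem =>
          ((pair_mem_toI (fun h => hzx h.symm)).1 hmem).2.2 hsxz
  have hFloop : ∀ x : Fin n, s x.castSucc (Fin.last n) → Fmap (toI s) x.castSucc = ∅ :=
    fun x hx => Fmap_castSucc_of_loop (fun h => single_mem_toI.1 h hx)
  apply Setoid.ext
  intro a b
  rw [show (toS (toI s)) a b ↔ _ from toS_rel]
  induction a using Fin.lastCases with
  | last =>
    induction b using Fin.lastCases with
    | last => simp [s.refl' _]
    | cast y =>
      rw [Fmap_last]
      by_cases hy : s y.castSucc (Fin.last n)
      · rw [hFloop y hy]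
        exact iff_of_true rfl (s.symm' hy)
      · rw [hFl y hy]
        refine iff_of_false (fun h => ?_) (fun h => hy (s.symm' h))
        have hm : y ∈ Finset.univ.filter (fun z => s y.castSucc z.castSucc) := by
          simp [s.refl' _]
        rw [← h] at hm
        simp at hm
  | cast x =>
    induction b using Fin.lastCases with
    | last =>
      rw [Fmap_last]
      by_cases hx : s x.castSucc (Fin.last n)
      · rw [hFloop x hx]
        exact iff_of_true rfl hx
      · rw [hFl x hx]
        refine iff_of_false (fun h => ?_) hx
        have hm : x ∈ Finset.univ.filter (fun z => s x.castSucc z.castSucc) := by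
          simp [s.refl' _]
        rw [h] at hm
        simp at hm
    | cast y =>
      by_cases hx : s x.castSucc (Fin.last n) <;> by_cases hy : s y.castSucc (Fin.last n)
      · rw [hFloop x hx, hFloop y hy]
        exact iff_of_true rfl (s.trans' hx (s.symm' hy))
      · rw [hFloop x hx, hFl y hy]
        refine iff_of_false (fun h => ?_) (fun h => hy (s.trans' (s.symm' h) hx))
        have hm : y ∈ Finset.univ.filter (fun z => s y.castSucc z.castSucc) := by
          simp [s.refl' _]
        rw [← h] at hm
        simp at hm
      · rw [hFl x hx, hFloop y hy]
        refine iff_of_false (fun h => ?_) (fun h => hx (s.trans' h hy))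
        have hm : x ∈ Finset.univ.filter (fun z => s x.castSucc z.castSucc) := by
          simp [s.refl' _]
        rw [h] at hm
        simp at hm
      · rw [hFl x hx, hFl y hy]
        constructor
        · intro h
          have hm : y ∈ Finset.univ.filter (fun z => s y.castSucc z.castSucc) := by
            simp [s.refl' _]
          rw [← h] at hm
          simpa using hm
        · intro h
          ext z
          simp only [Finset.mem_filter, Finset.mem_univ, true_and]
          exact ⟨fun hz => s.trans' (s.symm' h) hz, fun hz => s.trans' h hz⟩

end FromSetoid

/-- The bijection between rank-2 matroids and good setoids. -/
noncomputable def matEquiv :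
    {I : Finset (Finset (Fin n)) // IsMatroidIndep I ∧ matroidRank I = 2} ≃
      {s : Setoid (Fin (n + 1)) // Good s} where
  toFun I := ⟨toS I.1, good_toS I.2.1 I.2.2⟩
  invFun s := ⟨toI s.1, indep_toI, rank_toI s.2⟩
  left_inv := fun ⟨I, hI, hr⟩ => Subtype.ext (toI_toS hI hr)
  right_inv := fun ⟨s, hs⟩ => Subtype.ext (toS_toI hs)

/-- The bijection between bad setoids and boolean vectors. -/
noncomputable def badEquiv :
    {s : Setoid (Fin (n + 1)) // ¬ Good s} ≃ (Fin n → Bool) where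
  toFun s := fun x => decide (s.1 x.castSucc (Fin.last n))
  invFun p :=
    ⟨Setoid.ker (fun a : Fin (n + 1) => if h : a = Fin.last n then true else p (a.castPred h)),
      by
        rintro ⟨x, y, hx, hy, hxy⟩
        rw [Setoid.ker_def] at hx hy hxy
        rw [dif_pos rfl] at hx hy
        apply hxy
        rw [Bool.not_eq_true] at hx hy
        rw [hx, hy]⟩
  left_inv := fun ⟨s, hs⟩ => by
    apply Subtype.ext
    apply Setoid.ext
    intro a b
    rw [Setoid.ker_def]
    have hq : ∀ a : Fin (n + 1),
        (if h : a = Fin.last n then true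
          else decide (s (a.castPred h).castSucc (Fin.last n))) = decide (s a (Fin.last n)) := by
      intro a
      by_cases h : a = Fin.last n
      · subst h; simp [s.refl' _]
      · rw [dif_neg h, Fin.castSucc_castPred]
    rw [hq, hq, decide_eq_decide]
    simp only [Good, not_exists, not_and, not_not] at hs
    constructor
    · intro hiff
      by_cases ha : s a (Fin.last n)
      · exact s.trans' ha (s.symm' (hiff.1 ha))
      · exact hs a b ha (fun t => ha (hiff.2 t))
    · intro h
      exact ⟨fun t => s.trans' (s.symm' h) t, fun t => s.trans' h t⟩
  right_inv := fun p => by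
    funext x
    cases hpx : p x <;>
      simp [Setoid.ker_def, Fin.castPred_castSucc, (Fin.castSucc_lt_last x).ne, hpx]

end CountRankTwoAux

/-- The number of rank-2 matroids on a ground set of size `n` is `b(n+1) - 2^n`,
where `b` is the Bell number. -/
theorem count_rank_two_matroids (n : ℕ) :
    Nat.card {I : Finset (Finset (Fin n)) // IsMatroidIndep I ∧ matroidRank I = 2}
      = bell (n + 1) - 2 ^ n := by
  classical
  haveI : Finite (Setoid (Fin (n + 1))) := CountRankTwoAux.setoid_finite _
  rw [Nat.card_congr (CountRankTwoAux.matEquiv)]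
  have hsum : Nat.card {s : Setoid (Fin (n + 1)) // CountRankTwoAux.Good s}
      + Nat.card {s : Setoid (Fin (n + 1)) // ¬ CountRankTwoAux.Good s}
      = Nat.card (Setoid (Fin (n + 1))) := by
    rw [← Nat.card_sum]
    exact Nat.card_congr (Equiv.sumCompl _)
  have hbad : Nat.card {s : Setoid (Fin (n + 1)) // ¬ CountRankTwoAux.Good s} = 2 ^ n := by
    rw [Nat.card_congr CountRankTwoAux.badEquiv, Nat.card_eq_fintype_card]
    simp
  rw [bell]
  omega
end

section
/- Let G be an n-vertex graph of density p that is (ε,h)-typical, and let 2 ≤ k ≤ h. Then the number of k-cliques in G equals (1 ± O_k(ε)) · p^(binomial(k,2)) · n^k / k!, i.e., there is a constant C depending only on k such that the number of k-cliques lies between (1 - Cε)p^(binomial(k,2))n^k/k! and (1 + Cε)p^(binomial(k,2))n^k/k!, for ε sufficiently small in terms of k. -/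
/-- The density of an `n`-vertex graph: its number of edges divided by `C(n,2)`. -/
noncomputable def graphDensity {n : ℕ} (G : SimpleGraph (Fin n)) : ℝ :=
  (Nat.card G.edgeSet : ℝ) / (Nat.choose n 2 : ℝ)

/-- `G` is `(ε,h)`-typical: every set `A` of at most `h` vertices has
`(1 ± ε)·p^|A|·n` common neighbours, where `p` is the density of `G`. -/
def IsTypical {n : ℕ} (ε : ℝ) (h : ℕ) (G : SimpleGraph (Fin n)) : Prop :=
  ∀ A : Finset (Fin n), A.card ≤ h →
    (1 - ε) * graphDensity G ^ A.card * n ≤ ({v : Fin n | ∀ w ∈ A, G.Adj w v}.ncard : ℝ) ∧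
    ({v : Fin n | ∀ w ∈ A, G.Adj w v}.ncard : ℝ) ≤ (1 + ε) * graphDensity G ^ A.card * n

open Finset
open scoped Classical

lemma graphDensity_nonneg {n : ℕ} (G : SimpleGraph (Fin n)) : 0 ≤ graphDensity G :=
  div_nonneg (by positivity) (by positivity)

noncomputable def commonNbrs {n : ℕ} (G : SimpleGraph (Fin n)) (A : Finset (Fin n)) :
    Finset (Fin n) := univ.filter (fun v => ∀ w ∈ A, G.Adj w v)

lemma ncard_commonNbrs {n : ℕ} (G : SimpleGraph (Fin n)) (A : Finset (Fin n)) :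
    ({v : Fin n | ∀ w ∈ A, G.Adj w v}.ncard) = (commonNbrs G A).card := by
  rw [← Set.ncard_coe_finset]
  congr 1
  ext v
  simp [commonNbrs]

lemma double_count {n : ℕ} (G : SimpleGraph (Fin n)) (j : ℕ) :
    ∑ A ∈ univ.filter (fun s => G.IsNClique j s), (commonNbrs G A).card
      = (j + 1) * (univ.filter (fun s => G.IsNClique (j+1) s)).card := by
  rw [← Finset.card_sigma]
  have h2 : ((univ.filter (fun s => G.IsNClique (j+1) s)).sigma (fun s => s)).card
      = ∑ s ∈ univ.filter (fun s => G.IsNClique (j+1) s), s.card := Finset.card_sigma _ _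
  have h3 : ∑ s ∈ univ.filter (fun s => G.IsNClique (j+1) s), s.card
      = (j+1) * (univ.filter (fun s => G.IsNClique (j+1) s)).card := by
    rw [Finset.sum_congr rfl (fun s hs => ((Finset.mem_filter.mp hs).2).card_eq),
      Finset.sum_const, smul_eq_mul, mul_comm]
  rw [← h3, ← h2]
  apply Finset.card_bij' (fun x _ => (⟨insert x.2 x.1, x.2⟩ : (_ : Finset (Fin n)) × Fin n))
    (fun x _ => (⟨x.1.erase x.2, x.2⟩ : (_ : Finset (Fin n)) × Fin n))
  · rintro ⟨A, v⟩ hx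
    rw [Finset.mem_sigma] at hx ⊢
    obtain ⟨hA, hv⟩ := hx
    rw [Finset.mem_filter] at hA
    simp only [commonNbrs, Finset.mem_filter, Finset.mem_univ, true_and] at hv
    have hvA : v ∉ A := fun hmem => G.irrefl (hv v hmem)
    refine ⟨Finset.mem_filter.mpr ⟨Finset.mem_univ _, ?_⟩, Finset.mem_insert_self _ _⟩
    constructor
    · rw [Finset.coe_insert]
      exact hA.2.isClique.insert (fun b hb hne => (hv b hb).symm)
    · rw [Finset.card_insert_of_notMem hvA, hA.2.card_eq]
  · rintro ⟨s, v⟩ hx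
    rw [Finset.mem_sigma] at hx ⊢
    obtain ⟨hs, hv⟩ := hx
    rw [Finset.mem_filter] at hs
    refine ⟨Finset.mem_filter.mpr ⟨Finset.mem_univ _, ?_, ?_⟩, ?_⟩
    · exact hs.2.isClique.subset (Finset.coe_subset.mpr (Finset.erase_subset _ _))
    · rw [Finset.card_erase_of_mem hv, hs.2.card_eq]; omega
    · simp only [commonNbrs, Finset.mem_filter, Finset.mem_univ, true_and]
      intro w hw
      have hwv := Finset.ne_of_mem_erase hw
      exact hs.2.isClique (Finset.mem_erase.mp hw).2 hv hwv
  · rintro ⟨A, v⟩ hx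
    rw [Finset.mem_sigma] at hx
    simp only [commonNbrs, Finset.mem_filter, Finset.mem_univ, true_and] at hx
    have hvA : v ∉ A := fun hmem => G.irrefl (hx.2 v hmem)
    simp [Finset.erase_insert hvA]
  · rintro ⟨s, v⟩ hx
    rw [Finset.mem_sigma] at hx
    simp [Finset.insert_erase hx.2]

lemma pow_one_add_le (m : ℕ) {ε : ℝ} (h0 : 0 ≤ ε) (h1 : ε ≤ 1) :
    (1 + ε) ^ m ≤ 1 + (2 ^ m - 1) * ε := by
  induction m with
  | zero => simp
  | succ m ih =>
    have h2 : (1:ℝ) ≤ 2 ^ m := one_le_pow₀ (by norm_num)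
    calc (1+ε)^(m+1) = (1+ε)^m * (1+ε) := pow_succ _ _
      _ ≤ (1 + (2^m - 1)*ε) * (1+ε) := by nlinarith
      _ ≤ 1 + (2^(m+1) - 1)*ε := by
          have h3 : (2:ℝ)^(m+1) = 2^m * 2 := pow_succ 2 m
          nlinarith [mul_nonneg (mul_nonneg (by linarith : (0:ℝ) ≤ 2^m - 1) h0)
            (by linarith : (0:ℝ) ≤ 1 - ε)]

lemma clique_count_bounds {n : ℕ} (G : SimpleGraph (Fin n)) {ε : ℝ} (hε0 : 0 < ε)
    (hε1 : ε ≤ 1) {h : ℕ} (hG : IsTypical ε h G) :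
    ∀ m : ℕ, m + 1 ≤ h →
      (1-ε)^m * graphDensity G ^ ((m+1).choose 2) * (n:ℝ)^(m+1) / ((m+1).factorial) ≤
        (((univ.filter (fun s => G.IsNClique (m+1) s)).card : ℝ)) ∧
      (((univ.filter (fun s => G.IsNClique (m+1) s)).card : ℝ)) ≤
        (1+ε)^m * graphDensity G ^ ((m+1).choose 2) * (n:ℝ)^(m+1) / ((m+1).factorial) := by
  set p := graphDensity G with hpdef
  have hp : 0 ≤ p := graphDensity_nonneg G
  intro m
  induction m with
  | zero =>
    intro _
    have h1 : univ.filter (fun s => G.IsNClique 1 s)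
        = univ.image (fun v : Fin n => ({v} : Finset (Fin n))) := by
      ext s
      simp [SimpleGraph.isNClique_one, eq_comm]
    rw [h1, Finset.card_image_of_injective _ Finset.singleton_injective, card_univ,
      Fintype.card_fin]
    norm_num
  | succ m ih =>
    intro hmh
    have IH := ih (by omega)
    -- the sum over (m+1)-cliques of common-neighbourhood sizes
    have hdc : ((m:ℝ)+2) * ((univ.filter (fun s => G.IsNClique (m+2) s)).card : ℝ)
        = ∑ A ∈ univ.filter (fun s => G.IsNClique (m+1) s), ((commonNbrs G A).card : ℝ) := by
      have h' : (∑ A ∈ univ.filter (fun s => G.IsNClique (m+1) s), ((commonNbrs G A).card : ℝ))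
          = ((m:ℝ)+1+1) * ((univ.filter (fun s => G.IsNClique (m+1+1) s)).card : ℝ) := by
        exact_mod_cast double_count G (m+1)
      simp only [show m+1+1 = m+2 from rfl] at h'
      linarith [h']
    set cm : ℝ := ((univ.filter (fun s => G.IsNClique (m+1) s)).card : ℝ) with hcm
    set cm1 : ℝ := ((univ.filter (fun s => G.IsNClique (m+2) s)).card : ℝ) with hcm1
    have hbound : ∀ A ∈ univ.filter (fun s => G.IsNClique (m+1) s),
        (1-ε) * p^(m+1) * n ≤ ((commonNbrs G A).card : ℝ) ∧
        ((commonNbrs G A).card : ℝ) ≤ (1+ε) * p^(m+1) * n := by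
      intro A hA
      have hcard : A.card = m+1 := ((Finset.mem_filter.mp hA).2).card_eq
      have := hG A (by rw [hcard]; omega)
      rw [ncard_commonNbrs, hcard] at this
      exact this
    have hsum_lo : cm * ((1-ε) * p^(m+1) * n) ≤ ((m:ℝ)+2) * cm1 := by
      rw [hdc]
      calc cm * ((1-ε) * p^(m+1) * n)
          = ∑ _A ∈ univ.filter (fun s => G.IsNClique (m+1) s), (1-ε) * p^(m+1) * (n:ℝ) := by
            rw [Finset.sum_const, nsmul_eq_mul]
        _ ≤ _ := Finset.sum_le_sum (fun A hA => (hbound A hA).1)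
    have hsum_hi : ((m:ℝ)+2) * cm1 ≤ cm * ((1+ε) * p^(m+1) * n) := by
      rw [hdc]
      calc ∑ A ∈ univ.filter (fun s => G.IsNClique (m+1) s), ((commonNbrs G A).card : ℝ)
          ≤ ∑ _A ∈ univ.filter (fun s => G.IsNClique (m+1) s), (1+ε) * p^(m+1) * (n:ℝ) :=
            Finset.sum_le_sum (fun A hA => (hbound A hA).2)
        _ = cm * ((1+ε) * p^(m+1) * n) := by rw [Finset.sum_const, nsmul_eq_mul]
    have hch : (m+2).choose 2 = (m+1).choose 2 + (m+1) := by
      rw [Nat.choose_succ_succ (m+1) 1, Nat.choose_one_right, Nat.add_comm]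
    have hfacne : (((m+1).factorial : ℝ)) ≠ 0 := by positivity
    have hfac : (((m+2).factorial : ℝ)) = ((m:ℝ)+2) * ((m+1).factorial : ℝ) := by
      rw [Nat.factorial_succ]
      push_cast
      ring
    have hLid : ((m:ℝ)+2) * ((1-ε)^(m+1) * p^((m+2).choose 2) * (n:ℝ)^(m+2) / ((m+2).factorial))
        = ((1-ε) * p^(m+1) * n) * ((1-ε)^m * p^((m+1).choose 2) * (n:ℝ)^(m+1) / ((m+1).factorial)) := by
      rw [hch, pow_add, hfac]
      field_simp
      ring
    have hUid : ((m:ℝ)+2) * ((1+ε)^(m+1) * p^((m+2).choose 2) * (n:ℝ)^(m+2) / ((m+2).factorial))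
        = ((1+ε) * p^(m+1) * n) * ((1+ε)^m * p^((m+1).choose 2) * (n:ℝ)^(m+1) / ((m+1).factorial)) := by
      rw [hch, pow_add, hfac]
      field_simp
      ring
    have hm2pos : (0:ℝ) < (m:ℝ)+2 := by positivity
    constructor
    · have h0 : (0:ℝ) ≤ (1-ε) * p^(m+1) * n := by
        apply mul_nonneg (mul_nonneg (by linarith) (by positivity)) (by positivity)
      have step : ((m:ℝ)+2) * ((1-ε)^(m+1) * p^((m+2).choose 2) * (n:ℝ)^(m+2) / ((m+2).factorial))
          ≤ ((m:ℝ)+2) * cm1 := by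
        rw [hLid]
        calc ((1-ε) * p^(m+1) * n) * ((1-ε)^m * p^((m+1).choose 2) * (n:ℝ)^(m+1) / ((m+1).factorial))
            ≤ ((1-ε) * p^(m+1) * n) * cm := mul_le_mul_of_nonneg_left IH.1 h0
          _ = cm * ((1-ε) * p^(m+1) * n) := by ring
          _ ≤ ((m:ℝ)+2) * cm1 := hsum_lo
      exact le_of_mul_le_mul_left step hm2pos
    · have h0 : (0:ℝ) ≤ (1+ε) * p^(m+1) * n := by
        apply mul_nonneg (mul_nonneg (by linarith) (by positivity)) (by positivity)
      have step : ((m:ℝ)+2) * cm1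
          ≤ ((m:ℝ)+2) * ((1+ε)^(m+1) * p^((m+2).choose 2) * (n:ℝ)^(m+2) / ((m+2).factorial)) := by
        rw [hUid]
        calc ((m:ℝ)+2) * cm1 ≤ cm * ((1+ε) * p^(m+1) * n) := hsum_hi
          _ = ((1+ε) * p^(m+1) * n) * cm := by ring
          _ ≤ ((1+ε) * p^(m+1) * n) * ((1+ε)^m * p^((m+1).choose 2) * (n:ℝ)^(m+1) / ((m+1).factorial)) :=
            mul_le_mul_of_nonneg_left IH.2 h0
      exact le_of_mul_le_mul_left step hm2pos


/-- For each `k ≥ 2` there is a constant `C = C(k)` such that for all sufficiently small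
`ε > 0` (in terms of `k`): any `(ε,h)`-typical `n`-vertex graph `G` of density `p`, with
`k ≤ h`, has `(1 ± Cε)·p^(C(k,2))·n^k/k!` cliques on `k` vertices. -/
theorem typical_clique_count (k : ℕ) (hk : 2 ≤ k) :
    ∃ C : ℝ, 0 < C ∧ ∃ ε₀ : ℝ, 0 < ε₀ ∧
      ∀ ε : ℝ, 0 < ε → ε ≤ ε₀ → ∀ h n : ℕ, k ≤ h →
        ∀ G : SimpleGraph (Fin n), IsTypical ε h G →
          (1 - C * ε) * graphDensity G ^ (Nat.choose k 2) * (n : ℝ) ^ k / (Nat.factorial k)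
              ≤ (Nat.card {s : Finset (Fin n) // G.IsNClique k s} : ℝ) ∧
          (Nat.card {s : Finset (Fin n) // G.IsNClique k s} : ℝ)
              ≤ (1 + C * ε) * graphDensity G ^ (Nat.choose k 2) * (n : ℝ) ^ k
                  / (Nat.factorial k) := by
  refine ⟨2^k, by positivity, 1, one_pos, ?_⟩
  intro ε hε0 hε1 h n hkh G hG
  obtain ⟨m, rfl⟩ : ∃ m, k = m + 1 := ⟨k - 1, by omega⟩
  have hb := clique_count_bounds G hε0 hε1 hG m (by omega)
  set p := graphDensity G
  have hcard : (Nat.card {s : Finset (Fin n) // G.IsNClique (m+1) s} : ℝ)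
      = ((univ.filter (fun s => G.IsNClique (m+1) s)).card : ℝ) := by
    rw [Nat.card_eq_fintype_card, Fintype.card_subtype]
  rw [hcard]
  have hM : (0:ℝ) ≤ p^((m+1).choose 2) * (n:ℝ)^(m+1) / ((m+1).factorial) := by
    have := graphDensity_nonneg G
    positivity
  have h2m : (m:ℝ) ≤ 2^(m+1) := by
    have h1 : (m:ℝ) < 2^m := by exact_mod_cast Nat.lt_two_pow_self (n := m)
    have h2 : (2:ℝ)^m ≤ 2^(m+1) := by
      rw [pow_succ]; nlinarith [pow_pos (by norm_num : (0:ℝ) < 2) m]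
    linarith
  constructor
  · have hlow : 1 - (2:ℝ)^(m+1) * ε ≤ (1-ε)^m := by
      have hb2 := one_add_mul_le_pow (a := -ε) (by linarith) m
      have : (1:ℝ) + (-ε) = 1 - ε := by ring
      rw [this] at hb2
      have : 1 - (2:ℝ)^(m+1) * ε ≤ 1 + (m:ℝ) * (-ε) := by nlinarith
      linarith
    calc (1 - 2^(m+1) * ε) * p ^ ((m+1).choose 2) * (n:ℝ)^(m+1) / ((m+1).factorial)
        = (1 - 2^(m+1) * ε) * (p ^ ((m+1).choose 2) * (n:ℝ)^(m+1) / ((m+1).factorial)) := by ring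
      _ ≤ (1-ε)^m * (p ^ ((m+1).choose 2) * (n:ℝ)^(m+1) / ((m+1).factorial)) :=
        mul_le_mul_of_nonneg_right hlow hM
      _ = (1-ε)^m * p ^ ((m+1).choose 2) * (n:ℝ)^(m+1) / ((m+1).factorial) := by ring
      _ ≤ _ := hb.1
  · have hup : (1+ε)^m ≤ 1 + (2:ℝ)^(m+1) * ε := by
      have hb2 := pow_one_add_le m hε0.le hε1
      have h2 : (2:ℝ)^m - 1 ≤ 2^(m+1) := by
        have : (0:ℝ) < 2^m := by positivity
        rw [pow_succ]; nlinarith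
      nlinarith
    calc ((univ.filter (fun s => G.IsNClique (m+1) s)).card : ℝ)
        ≤ (1+ε)^m * p ^ ((m+1).choose 2) * (n:ℝ)^(m+1) / ((m+1).factorial) := hb.2
      _ = (1+ε)^m * (p ^ ((m+1).choose 2) * (n:ℝ)^(m+1) / ((m+1).factorial)) := by ring
      _ ≤ (1 + 2^(m+1) * ε) * (p ^ ((m+1).choose 2) * (n:ℝ)^(m+1) / ((m+1).factorial)) :=
        mul_le_mul_of_nonneg_right hup hM
      _ = (1 + 2^(m+1) * ε) * p ^ ((m+1).choose 2) * (n:ℝ)^(m+1) / ((m+1).factorial) := by ring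
end

section
/- Define f(s₃, s₄) = s₃(log(n³/6) - log s₃ + 1) + s₄(log(n⁴/24) - log s₄ + 1) - n²/2 on the domain {(s₃,s₄) : s₃, s₄ > 0, 3s₃ + 6s₄ = n²/2}. Then f attains its maximum at s₃ = (√3-1)n²/6, s₄ = (2-√3)n²/12, and the maximum value is (n²/6)(log n - 3 + √3/2 + log((1+√3)/2)). -/
open Real

/-- Tangent-line inequality for the concave function `x ↦ x (c - log x + 1)`. -/
lemma tangent_key (s t c : ℝ) (hs : 0 < s) (ht : 0 < t) :
    s * (c - log s + 1) ≤ t * (c - log t + 1) + (c - log t) * (s - t) := by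
  have h1 : log (t / s) ≤ t / s - 1 := Real.log_le_sub_one_of_pos (div_pos ht hs)
  have h2 : log (t / s) = log t - log s := log_div ht.ne' hs.ne'
  have h3 : s * (log t - log s) ≤ t - s := by
    rw [← h2]
    calc s * log (t / s) ≤ s * (t / s - 1) := by nlinarith
      _ = t - s := by field_simp
  nlinarith

/-- The function `f(s₃,s₄) = s₃(log(n³/6) - log s₃ + 1) + s₄(log(n⁴/24) - log s₄ + 1) - n²/2`
on `{(s₃,s₄) : s₃,s₄ > 0, 3s₃ + 6s₄ = n²/2}` attains its maximum at
`s₃ = (√3-1)n²/6`, `s₄ = (2-√3)n²/12`, with maximum value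
`(n²/6)(log n - 3 + √3/2 + log((1+√3)/2))`. -/
theorem optimisation (n : ℝ) (hn : 0 < n) :
    let f : ℝ → ℝ → ℝ := fun s₃ s₄ =>
      s₃ * (log (n ^ 3 / 6) - log s₃ + 1) + s₄ * (log (n ^ 4 / 24) - log s₄ + 1) - n ^ 2 / 2
    let t₃ : ℝ := (Real.sqrt 3 - 1) * n ^ 2 / 6
    let t₄ : ℝ := (2 - Real.sqrt 3) * n ^ 2 / 12
    (∀ s₃ s₄ : ℝ, 0 < s₃ → 0 < s₄ → 3 * s₃ + 6 * s₄ = n ^ 2 / 2 → f s₃ s₄ ≤ f t₃ t₄) ∧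
    3 * t₃ + 6 * t₄ = n ^ 2 / 2 ∧
    f t₃ t₄ = n ^ 2 / 6 * (log n - 3 + Real.sqrt 3 / 2 + log ((1 + Real.sqrt 3) / 2)) := by
  intro f t₃ t₄
  have ht3def : t₃ = (Real.sqrt 3 - 1) * n ^ 2 / 6 := rfl
  have ht4def : t₄ = (2 - Real.sqrt 3) * n ^ 2 / 12 := rfl
  have hfdef : ∀ a b : ℝ, f a b =
      a * (log (n ^ 3 / 6) - log a + 1) + b * (log (n ^ 4 / 24) - log b + 1) - n ^ 2 / 2 :=
    fun a b => rfl
  have s3 : Real.sqrt 3 * Real.sqrt 3 = 3 := Real.mul_self_sqrt (by norm_num)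
  have s3nn : (0:ℝ) ≤ Real.sqrt 3 := Real.sqrt_nonneg 3
  have s3lb : 1 < Real.sqrt 3 := by nlinarith
  have s3ub : Real.sqrt 3 < 2 := by nlinarith
  have hn2 : 0 < n ^ 2 := pow_pos hn 2
  have ht₃ : 0 < t₃ := by
    rw [ht3def]
    have : 0 < Real.sqrt 3 - 1 := by linarith
    positivity
  have ht₄ : 0 < t₄ := by
    rw [ht4def]
    have : 0 < 2 - Real.sqrt 3 := by linarith
    positivity
  set M : ℝ := n * (1 + Real.sqrt 3) / 2 with hM
  have hMpos : 0 < M := by rw [hM]; positivity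
  have e3 : n ^ 3 / 6 = t₃ * M := by
    rw [ht3def, hM]
    linear_combination (-(n ^ 3) / 12) * s3
  have e4 : n ^ 4 / 24 = t₄ * M ^ 2 := by
    rw [ht4def, hM]
    linear_combination ((n ^ 4 * Real.sqrt 3) / 48) * s3
  have L3 : log (n ^ 3 / 6) - log t₃ = log M := by
    rw [e3, log_mul ht₃.ne' hMpos.ne']; ring
  have L4 : log (n ^ 4 / 24) - log t₄ = 2 * log M := by
    rw [e4, log_mul ht₄.ne' (pow_pos hMpos 2).ne', log_pow]; push_cast; ring
  refine ⟨?_, ?_, ?_⟩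
  · intro s₃ s₄ hs₃ hs₄ hcon
    have k1 := tangent_key s₃ t₃ (log (n ^ 3 / 6)) hs₃ ht₃
    have k2 := tangent_key s₄ t₄ (log (n ^ 4 / 24)) hs₄ ht₄
    have hz : s₃ - t₃ + 2 * (s₄ - t₄) = 0 := by
      rw [ht3def, ht4def] at *
      linarith [s3, hcon]
    have hcancel : (log (n ^ 3 / 6) - log t₃) * (s₃ - t₃)
        + (log (n ^ 4 / 24) - log t₄) * (s₄ - t₄) = 0 := by
      rw [L3, L4]; linear_combination log M * hz
    rw [hfdef, hfdef]
    linarith [k1, k2, hcancel]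
  · rw [ht3def, ht4def]; ring
  · have hK : log M = log n + log ((1 + Real.sqrt 3) / 2) := by
      rw [hM, show n * (1 + Real.sqrt 3) / 2 = n * ((1 + Real.sqrt 3) / 2) by ring,
        log_mul hn.ne' (by positivity)]
    have c3 : log (n ^ 3 / 6) = log t₃ + (log n + log ((1 + Real.sqrt 3) / 2)) := by
      rw [← hK]; linarith [L3]
    have c4 : log (n ^ 4 / 24) = log t₄ + 2 * (log n + log ((1 + Real.sqrt 3) / 2)) := by
      rw [← hK]; linarith [L4]
    rw [hfdef, c3, c4, ht3def, ht4def]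
    ring
end
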